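/- The function δ ↦ φ(δ) = (1/2)(1+δ/2)(1 + √(1 + 4/(1+δ/2))) is strictly concave on (-1, ∞). -/

import Mathlib

noncomputable def phi (δ : ℝ) : ℝ :=
  (1/2) * (1 + δ/2) * (1 + Real.sqrt (1 + 4 / (1 + δ/2)))

/-!
With `u = 1 + δ/2`, `φ(δ) = u/2 + √(u²/4 + u)`, an affine function plus the square root of a
quadratic in `δ`. For a quadratic `q` with positive discriminant, `(√q)'' = (4ac - b²) / (4 q √q)`,
so `√q` is strictly concave wherever `q > 0`.
-/

open Set Filter Topology

theorem strictConcaveOn_of_hasDerivAt2_neg {D : Set ℝ} (hD : Convex ℝ D) {f f' f'' : ℝ → ℝ}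
    (hf : ContinuousOn f D) (hf' : ∀ x ∈ interior D, HasDerivAt f (f' x) x)
    (hf'' : ∀ x ∈ interior D, HasDerivAt f' (f'' x) x)
    (hf''_neg : ∀ x ∈ interior D, f'' x < 0) : StrictConcaveOn ℝ D f := by
  refine strictConcaveOn_of_deriv2_neg hD hf fun x hx => ?_
  have hderiv : deriv f =ᶠ[𝓝 x] f' :=
    eventually_of_mem (isOpen_interior.mem_nhds hx) fun y hy => (hf' y hy).deriv
  rw [Function.iterate_succ_apply, Function.iterate_one, hderiv.deriv_eq, (hf'' x hx).deriv]
  exact hf''_neg x hx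

theorem strictConcaveOn_sqrt_quadratic {a b c : ℝ} (hdisc : 4 * a * c < b ^ 2) {s : Set ℝ}
    (hs : Convex ℝ s) (hpos : ∀ x ∈ s, 0 < a * x ^ 2 + b * x + c) :
    StrictConcaveOn ℝ s fun x => √(a * x ^ 2 + b * x + c) := by
  set q : ℝ → ℝ := fun x => a * x ^ 2 + b * x + c
  have hq : ∀ x, HasDerivAt q (2 * a * x + b) x := fun x =>
    ((((hasDerivAt_id' x).pow 2).const_mul a).add ((hasDerivAt_id' x).const_mul b)).add_const c
      |>.congr_deriv (by ring)
  have hpos' : ∀ x ∈ interior s, 0 < q x := fun x hx => hpos x (interior_subset hx)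
  refine strictConcaveOn_of_hasDerivAt2_neg hs (f' := fun x => (2 * a * x + b) / (2 * √(q x)))
    (f'' := fun x => (4 * a * c - b ^ 2) / (4 * q x * √(q x))) ?_ ?_ ?_ ?_
  · exact (by fun_prop : Continuous q).sqrt.continuousOn
  · exact fun x hx => (hq x).sqrt (hpos' x hx).ne'
  · intro x hx
    have hq_ne : q x ≠ 0 := (hpos' x hx).ne'
    have hsqrt_pos : 0 < √(q x) := Real.sqrt_pos.mpr (hpos' x hx)
    have hsq : √(q x) ^ 2 = q x := Real.sq_sqrt (hpos' x hx).le
    have hlin : HasDerivAt (fun y => 2 * a * y + b) (2 * a) x := by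
      simpa using ((hasDerivAt_id x).const_mul (2 * a)).add_const b
    refine (hlin.div (((hq x).sqrt (hpos' x hx).ne').const_mul 2) (by positivity)).congr_deriv ?_
    field_simp
    rw [hsq]
    simp only [q]
    ring
  · intro x hx
    have hqx := hpos' x hx
    exact div_neg_of_neg_of_pos (by linarith) (by positivity)

theorem phi_eq_of_neg_one_lt {δ : ℝ} (hδ : -1 < δ) :
    phi δ = √((1/16) * δ ^ 2 + (3/4) * δ + 5/4) + ((1/4) * δ + 1/2) := by
  have hu : 0 < 1 + δ/2 := by linarith
  have h2 : 2 + δ ≠ 0 := by linarith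
  have hsqrt : (1/2) * (1 + δ/2) * √(1 + 4 / (1 + δ/2)) = √((1/16) * δ ^ 2 + (3/4) * δ + 5/4) := by
    rw [← Real.sqrt_sq (by positivity : 0 ≤ (1/2) * (1 + δ/2)), ← Real.sqrt_mul (sq_nonneg _)]
    congr 1
    field_simp
    ring
  rw [phi, mul_add, mul_one, hsqrt]
  ring

theorem phi_strictConcaveOn : StrictConcaveOn ℝ (Set.Ioi (-1 : ℝ)) phi := by
  have hsqrt := strictConcaveOn_sqrt_quadratic (a := 1/16) (b := 3/4) (c := 5/4) (by norm_num)
    (convex_Ioi (-1)) fun δ (hδ : -1 < δ) => by nlinarith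
  have haffine : ConcaveOn ℝ (Ioi (-1)) fun δ : ℝ => (1/4) * δ + 1/2 :=
    ((concaveOn_id (convex_Ioi _)).smul (by norm_num : (0 : ℝ) ≤ 1/4)).add_const _
  exact (hsqrt.add_concaveOn haffine).congr fun δ hδ => (phi_eq_of_neg_one_lt hδ).symm
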